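/- arXiv:1001.3332 — 5 statements merged into one kernel-verified Lean document; each statement's English description precedes it below -/
import Mathlib

section
/- Let F be a finite family of axis-parallel rectangles that is triangle-free, i.e., no three rectangles of F pairwise intersect. Then F can be partitioned into two subfamilies F1 and F2 such that no two rectangles of F1 cross each other and no two rectangles of F2 cross each other. -/
/-- An axis-parallel rectangle `[a,b] × [c,d]` with `a < b` and `c < d`. -/
structure AxisRect where
  a : ℝ
  b : ℝ
  c : ℝ
  d : ℝ
  hab : a < b
  hcd : c < d

/-- The x-projection of an axis-parallel rectangle. -/
def AxisRect.X (R : AxisRect) : Set ℝ := Set.Icc R.a R.b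

/-- The y-projection of an axis-parallel rectangle. -/
def AxisRect.Y (R : AxisRect) : Set ℝ := Set.Icc R.c R.d

/-- The rectangle as a subset of the plane `ℝ × ℝ`. -/
def AxisRect.toSet (R : AxisRect) : Set (ℝ × ℝ) := R.X ×ˢ R.Y

/-- The four corners of an axis-parallel rectangle. -/
def AxisRect.corners (R : AxisRect) : Set (ℝ × ℝ) :=
  ({R.a, R.b} : Set ℝ) ×ˢ ({R.c, R.d} : Set ℝ)

/-- Two rectangles cross: one x-projection is strictly contained in the other while the
y-projections are strictly contained the other way around. -/
def AxisRect.Cross (R S : AxisRect) : Prop :=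
  (R.X ⊂ S.X ∧ S.Y ⊂ R.Y) ∨ (S.X ⊂ R.X ∧ R.Y ⊂ S.Y)

/-- Two rectangles are in general position: all endpoints of the x-projections are distinct,
and all endpoints of the y-projections are distinct. -/
def GenPosPair (R S : AxisRect) : Prop :=
  R.a ≠ S.a ∧ R.a ≠ S.b ∧ R.b ≠ S.a ∧ R.b ≠ S.b ∧
  R.c ≠ S.c ∧ R.c ≠ S.d ∧ R.d ≠ S.c ∧ R.d ≠ S.d


/-!
Rectangles ordered by `R < S` iff `R.X ⊂ S.X` and `S.Y ⊂ R.Y` form a strict partial order whose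
comparable pairs are exactly the crossing pairs, and comparable rectangles intersect. Triangle-freeness
therefore excludes chains of length three, so the minimal rectangles and the remaining ones are two
antichains, i.e. two non-crossing subfamilies.
-/

/-- Take `S` to be the elements without an `r`-predecessor. -/
theorem exists_two_antichains_of_no_path_two {ι : Type*} (r : ι → ι → Prop)
    (h : ∀ a b c, r a b → r b c → False) :
    ∃ S : Set ι, (∀ i ∈ S, ∀ j ∈ S, ¬ r i j) ∧ (∀ i ∈ Sᶜ, ∀ j ∈ Sᶜ, ¬ r i j) := by
  refine ⟨{i | ∀ j, ¬ r j i}, fun i _ j hj => hj i, fun i hi j _ hij => ?_⟩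
  obtain ⟨k, hki⟩ : ∃ k, r k i := by simpa using hi
  exact h k i j hki hij

namespace AxisRect

def CrossLt (R S : AxisRect) : Prop := R.X ⊂ S.X ∧ S.Y ⊂ R.Y

theorem cross_iff_crossLt {R S : AxisRect} : R.Cross S ↔ R.CrossLt S ∨ S.CrossLt R := Iff.rfl

theorem CrossLt.trans {R S T : AxisRect} (h₁ : R.CrossLt S) (h₂ : S.CrossLt T) : R.CrossLt T :=
  ⟨h₁.1.trans h₂.1, h₂.2.trans h₁.2⟩

theorem CrossLt.ne {R S : AxisRect} (h : R.CrossLt S) : R ≠ S := by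
  rintro rfl
  exact h.1.ne rfl

/-- The left edge of the narrower rectangle meets the bottom edge of the flatter one. -/
theorem CrossLt.inter_nonempty {R S : AxisRect} (h : R.CrossLt S) :
    (R.toSet ∩ S.toSet).Nonempty :=
  ⟨(R.a, S.c), ⟨⟨le_rfl, R.hab.le⟩, h.2.subset ⟨le_rfl, S.hcd.le⟩⟩,
    ⟨h.1.subset ⟨le_rfl, R.hab.le⟩, ⟨le_rfl, S.hcd.le⟩⟩⟩

end AxisRect

/-- **Non-crossing partition.** Any finite triangle-free family of axis-parallel rectangles
can be partitioned into two subfamilies, each containing no two crossing rectangles. -/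
theorem noncrossing_partition (n : ℕ) (R : Fin n → AxisRect)
    (htf : ∀ i j k : Fin n, i ≠ j → i ≠ k → j ≠ k →
      ¬(((R i).toSet ∩ (R j).toSet).Nonempty ∧
        ((R i).toSet ∩ (R k).toSet).Nonempty ∧
        ((R j).toSet ∩ (R k).toSet).Nonempty)) :
    ∃ S : Finset (Fin n),
      (∀ i ∈ S, ∀ j ∈ S, ¬ AxisRect.Cross (R i) (R j)) ∧
      (∀ i ∈ Sᶜ, ∀ j ∈ Sᶜ, ¬ AxisRect.Cross (R i) (R j)) := by
  classical
  have ne_of_crossLt {i j : Fin n} (h : (R i).CrossLt (R j)) : i ≠ j :=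
    fun e => h.ne (congrArg R e)
  have no_chain (i j k : Fin n) (hij : (R i).CrossLt (R j)) (hjk : (R j).CrossLt (R k)) : False :=
    htf i j k (ne_of_crossLt hij) (ne_of_crossLt (hij.trans hjk)) (ne_of_crossLt hjk)
      ⟨hij.inter_nonempty, (hij.trans hjk).inter_nonempty, hjk.inter_nonempty⟩
  obtain ⟨S, hS, hSc⟩ := exists_two_antichains_of_no_path_two _ no_chain
  refine ⟨S.toFinset, fun i hi j hj => ?_, fun i hi j hj => ?_⟩
  · rw [Set.mem_toFinset] at hi hj
    exact AxisRect.cross_iff_crossLt.not.2 (not_or.2 ⟨hS i hi j hj, hS j hj i hi⟩)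
  · rw [Finset.mem_compl, Set.mem_toFinset, ← Set.mem_compl_iff] at hi hj
    exact AxisRect.cross_iff_crossLt.not.2 (not_or.2 ⟨hSc i hi j hj, hSc j hj i hi⟩)
end

section
/- Let G be a finite simple graph with n vertices whose minimum vertex cover size opt satisfies n ≤ 2·opt. Let k ≥ 1 be an integer, let c1 > 0 be a rational number, and let U1, …, Uk ⊆ V(G) be vertex subsets with U1 ∪ ⋯ ∪ Uk = V(G) and Σᵢ |Uᵢ| ≤ c1·n. For each i, let Cᵢ be a minimum vertex cover of the induced subgraph G − Uᵢ = G[V(G) \ Uᵢ]. Then each set Uᵢ ∪ Cᵢ is a vertex cover of G, and there exists an index i with |Uᵢ ∪ Cᵢ| ≤ (1 + 2·c1/k)·opt. -/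
/-- `C` is a vertex cover of the subgraph of `G` induced by `S`: it consists of vertices of
`S` and covers every edge of `G` with both endpoints in `S`. -/
def IsVCOn {V : Type*} (G : SimpleGraph V) (S C : Finset V) : Prop :=
  C ⊆ S ∧ ∀ u v : V, G.Adj u v → u ∈ S → v ∈ S → u ∈ C ∨ v ∈ C

/-- The minimum cardinality of a vertex cover of the subgraph of `G` induced by `S`. -/
noncomputable def vcOn {V : Type*} (G : SimpleGraph V) (S : Finset V) : ℕ :=
  sInf {n | ∃ C : Finset V, IsVCOn G S C ∧ C.card = n}

/-!
Covering `U i` entirely and `G − U i` optimally gives a vertex cover of `G`, and since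
restricting an optimal cover of `G` to `V \ U i` covers `G − U i`, we get
`|U i ∪ C i| ≤ |U i| + opt`. Averaging over `i`, some index has
`|U i ∪ C i| ≤ opt + (∑ i |U i|) / k ≤ opt + c1 · n / k ≤ opt + 2 c1 · opt / k`.
-/

namespace IsVCOn

variable {V : Type*} {G : SimpleGraph V}

theorem refl (S : Finset V) : IsVCOn G S S :=
  ⟨subset_rfl, fun _ _ _ hu _ => Or.inl hu⟩

theorem inter_of_subset [DecidableEq V] {S T C : Finset V} (hC : IsVCOn G T C)
    (hST : S ⊆ T) : IsVCOn G S (C ∩ S) := by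
  refine ⟨Finset.inter_subset_right, fun u v huv hu hv => ?_⟩
  rcases hC.2 u v huv (hST hu) (hST hv) with h | h
  · exact Or.inl (Finset.mem_inter.mpr ⟨h, hu⟩)
  · exact Or.inr (Finset.mem_inter.mpr ⟨h, hv⟩)

theorem union_covers_of_compl [Fintype V] [DecidableEq V] {U C : Finset V}
    (hC : IsVCOn G (Finset.univ \ U) C) {u v : V} (huv : G.Adj u v) :
    u ∈ U ∪ C ∨ v ∈ U ∪ C := by
  by_cases hu : u ∈ U
  · exact Or.inl (Finset.mem_union_left _ hu)
  by_cases hv : v ∈ U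
  · exact Or.inr (Finset.mem_union_left _ hv)
  rcases hC.2 u v huv (by simp [hu]) (by simp [hv]) with h | h
  · exact Or.inl (Finset.mem_union_right _ h)
  · exact Or.inr (Finset.mem_union_right _ h)

theorem vcOn_le_card {S C : Finset V} (hC : IsVCOn G S C) : vcOn G S ≤ C.card :=
  Nat.sInf_le ⟨C, hC, rfl⟩

end IsVCOn

theorem exists_isVCOn_card_eq_vcOn {V : Type*} (G : SimpleGraph V) (S : Finset V) :
    ∃ C, IsVCOn G S C ∧ C.card = vcOn G S :=
  Nat.sInf_mem (s := {n | ∃ C, IsVCOn G S C ∧ C.card = n}) ⟨S.card, S, IsVCOn.refl S, rfl⟩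

theorem vcOn_mono {V : Type*} [DecidableEq V] (G : SimpleGraph V) {S T : Finset V}
    (hST : S ⊆ T) : vcOn G S ≤ vcOn G T := by
  obtain ⟨C, hC, hCcard⟩ := exists_isVCOn_card_eq_vcOn G T
  calc vcOn G S ≤ (C ∩ S).card := (hC.inter_of_subset hST).vcOn_le_card
    _ ≤ C.card := Finset.card_le_card Finset.inter_subset_left
    _ = vcOn G T := hCcard

theorem Finset.exists_card_union_le_add_div {ι V : Type*} [Fintype ι] [Nonempty ι]
    [DecidableEq V] (U C : ι → Finset V) {a b : ℚ}
    (hU : ∑ i, ((U i).card : ℚ) ≤ a) (hC : ∀ i, ((C i).card : ℚ) ≤ b) :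
    ∃ i, ((U i ∪ C i).card : ℚ) ≤ b + a / Fintype.card ι := by
  have hι : (0 : ℚ) < Fintype.card ι := by exact_mod_cast Fintype.card_pos
  have hsum : ∑ i, ((U i ∪ C i).card : ℚ) ≤ ∑ _i : ι, (b + a / Fintype.card ι) :=
    calc ∑ i, ((U i ∪ C i).card : ℚ)
        ≤ ∑ i, (((U i).card : ℚ) + b) := Finset.sum_le_sum fun i _ => by
          have : ((U i ∪ C i).card : ℚ) ≤ (U i).card + (C i).card := by
            exact_mod_cast Finset.card_union_le (U i) (C i)
          linarith [hC i]
      _ ≤ a + Fintype.card ι * b := by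
          rw [Finset.sum_add_distrib, Finset.sum_const, Finset.card_univ, nsmul_eq_mul]
          linarith
      _ = ∑ _i : ι, (b + a / Fintype.card ι) := by
          rw [Finset.sum_const, Finset.card_univ, nsmul_eq_mul]
          field_simp
          ring
  obtain ⟨i, -, hi⟩ := Finset.exists_le_of_sum_le Finset.univ_nonempty hsum
  exact ⟨i, hi⟩

theorem baker_extension_general {V : Type*} [Fintype V] [DecidableEq V] (G : SimpleGraph V)
    (hn : Fintype.card V ≤ 2 * vcOn G Finset.univ)
    (k : ℕ) (hk : 1 ≤ k) (c1 : ℚ) (hc1 : 0 < c1)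
    (U : Fin k → Finset V)
    (hUsum : (∑ i : Fin k, ((U i).card : ℚ)) ≤ c1 * Fintype.card V)
    (C : Fin k → Finset V)
    (hCvc : ∀ i : Fin k, IsVCOn G (Finset.univ \ U i) (C i))
    (hCmin : ∀ i : Fin k, (C i).card = vcOn G (Finset.univ \ U i)) :
    (∀ i : Fin k, ∀ u v : V, G.Adj u v → u ∈ U i ∪ C i ∨ v ∈ U i ∪ C i) ∧
    ∃ i : Fin k, ((U i ∪ C i).card : ℚ) ≤ (1 + 2 * c1 / k) * vcOn G Finset.univ := by
  refine ⟨fun i u v huv => (hCvc i).union_covers_of_compl huv, ?_⟩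
  have : Nonempty (Fin k) := ⟨⟨0, hk⟩⟩
  have hC (i : Fin k) : ((C i).card : ℚ) ≤ vcOn G Finset.univ := by
    rw [hCmin i]
    exact_mod_cast vcOn_mono G (Finset.subset_univ _)
  have hU : ∑ i, ((U i).card : ℚ) ≤ 2 * c1 * vcOn G Finset.univ :=
    calc ∑ i, ((U i).card : ℚ) ≤ c1 * Fintype.card V := hUsum
      _ ≤ c1 * (2 * vcOn G Finset.univ) := by gcongr; exact_mod_cast hn
      _ = 2 * c1 * vcOn G Finset.univ := by ring
  obtain ⟨i, hi⟩ := Finset.exists_card_union_le_add_div U C hU hC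
  refine ⟨i, hi.trans_eq ?_⟩
  rw [Fintype.card_fin]
  ring

/-- **Baker extension (core counting argument).** Let `G` have `n` vertices with
`n ≤ 2 · opt`, where `opt = τ(G)`. Let `U 1, …, U k` cover `V(G)` with `∑ i |U i| ≤ c1 · n`,
and let `C i` be a minimum vertex cover of `G − U i`. Then each `U i ∪ C i` is a vertex
cover of `G` and some `i` satisfies `|U i ∪ C i| ≤ (1 + 2 c1 / k) · opt`. -/
theorem baker_extension {V : Type*} [Fintype V] [DecidableEq V] (G : SimpleGraph V)
    (hn : Fintype.card V ≤ 2 * vcOn G Finset.univ)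
    (k : ℕ) (hk : 1 ≤ k) (c1 : ℚ) (hc1 : 0 < c1)
    (U : Fin k → Finset V) (hUcover : ∀ v : V, ∃ i : Fin k, v ∈ U i)
    (hUsum : (∑ i : Fin k, ((U i).card : ℚ)) ≤ c1 * Fintype.card V)
    (C : Fin k → Finset V)
    (hCvc : ∀ i : Fin k, IsVCOn G (Finset.univ \ U i) (C i))
    (hCmin : ∀ i : Fin k, (C i).card = vcOn G (Finset.univ \ U i)) :
    (∀ i : Fin k, ∀ u v : V, G.Adj u v → u ∈ U i ∪ C i ∨ v ∈ U i ∪ C i) ∧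
    ∃ i : Fin k, ((U i ∪ C i).card : ℚ) ≤ (1 + 2 * c1 / k) * vcOn G Finset.univ :=
  baker_extension_general G hn k hk c1 hc1 U hUsum C hCvc hCmin
end

section
/- Let R1 and R2 be two axis-parallel rectangles in general position such that R1 ∩ R2 ≠ ∅, R1 ⊄ R2, R2 ⊄ R1, and at least one corner of one of the rectangles lies in the other rectangle (a corner intersection). Then the intersection of the topological boundaries of R1 and R2 consists of exactly two points. -/
/-!
In general position the two boundaries meet only where a vertical edge of one rectangle crosses
a horizontal edge of the other. Writing `nₓ` for the number of endpoints of `X₁` lying in `X₂`,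
`mₓ` for the number of endpoints of `X₂` lying in `X₁`, and similarly `n_y`, `m_y`, the number of
such crossings is `mₓ n_y + nₓ m_y`. For overlapping intervals `mₓ + nₓ = 2 = m_y + n_y`, since
both sides count the endpoints of the intersection interval. Hence the count is `2` unless
`nₓ, n_y ∈ {0, 2}`, and these four cases are exactly the two containments and the two crossings,
where no corner of either rectangle lies in the other.
-/

open Set

section Topology
variable {α β : Type*} [TopologicalSpace α] [TopologicalSpace β]

theorem frontier_prod_inter_frontier_prod {s₁ s₂ : Set α} {t₁ t₂ : Set β}
    (hs₁ : IsClosed s₁) (hs₂ : IsClosed s₂) (ht₁ : IsClosed t₁) (ht₂ : IsClosed t₂)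
    (hs : Disjoint (frontier s₁) (frontier s₂)) (ht : Disjoint (frontier t₁) (frontier t₂)) :
    frontier (s₁ ×ˢ t₁) ∩ frontier (s₂ ×ˢ t₂) =
      (frontier s₂ ∩ s₁) ×ˢ (frontier t₁ ∩ t₂) ∪ (frontier s₁ ∩ s₂) ×ˢ (frontier t₂ ∩ t₁) := by
  rw [frontier_prod_eq, frontier_prod_eq, hs₁.closure_eq, hs₂.closure_eq, ht₁.closure_eq,
    ht₂.closure_eq, union_inter_distrib_right, inter_union_distrib_left,
    inter_union_distrib_left, prod_inter_prod, prod_inter_prod, prod_inter_prod, prod_inter_prod,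
    hs.inter_eq, ht.inter_eq, prod_empty, empty_prod, empty_union, union_empty, inter_comm s₁,
    inter_comm t₁]

end Topology

section Counting
variable {α β : Type*}

theorem ncard_prod_union_prod {s₁ s₂ : Set α} {t₁ t₂ : Set β} (hs : Disjoint s₁ s₂)
    (hs₁ : s₁.Finite) (hs₂ : s₂.Finite) (ht₁ : t₁.Finite) (ht₂ : t₂.Finite) :
    (s₁ ×ˢ t₁ ∪ s₂ ×ˢ t₂).ncard = s₁.ncard * t₁.ncard + s₂.ncard * t₂.ncard := by
  rw [ncard_union_eq (disjoint_prod.2 (Or.inl hs)) (hs₁.prod ht₁) (hs₂.prod ht₂), ncard_prod,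
    ncard_prod]

theorem ncard_pair_inter_eq {u v : α} (huv : u ≠ v) (s : Set α) [Decidable (u ∈ s)]
    [Decidable (v ∈ s)] :
    ({u, v} ∩ s).ncard = (if u ∈ s then 1 else 0) + (if v ∈ s then 1 else 0) := by
  by_cases hu : u ∈ s <;> by_cases hv : v ∈ s <;>
    simp [insert_inter_of_mem, insert_inter_of_notMem, hu, hv, huv]

theorem ncard_pair_inter_eq_two_iff {u v : α} (huv : u ≠ v) (s : Set α) :
    ({u, v} ∩ s).ncard = 2 ↔ {u, v} ⊆ s := by
  rw [← inter_eq_left, ← ncard_pair huv]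
  exact ⟨fun h => eq_of_subset_of_ncard_le inter_subset_left h.ge, fun h => by rw [h]⟩

end Counting

section Intervals
variable {α : Type*} [LinearOrder α]

theorem ncard_pair_inter_Icc_add_ncard_pair_inter_Icc {a b c d : α} (hab : a < b)
    (hcd : c < d) (hac : a ≠ c) (hbd : b ≠ d) (h : (Icc a b ∩ Icc c d).Nonempty) :
    ({c, d} ∩ Icc a b).ncard + ({a, b} ∩ Icc c d).ncard = 2 := by
  classical
  obtain ⟨x, ⟨hax, hxb⟩, hcx, hxd⟩ := h
  rw [ncard_pair_inter_eq hcd.ne, ncard_pair_inter_eq hab.ne]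
  simp only [mem_Icc]
  rcases hac.lt_or_gt with h1 | h1 <;> rcases hbd.lt_or_gt with h2 | h2 <;> split_ifs <;> grind

theorem ncard_pair_inter_Icc_eq_two_iff {a b c d : α} (hab : a < b) :
    ({a, b} ∩ Icc c d).ncard = 2 ↔ Icc a b ⊆ Icc c d := by
  rw [ncard_pair_inter_eq_two_iff hab.ne, Icc_subset_Icc_iff hab.le, insert_subset_iff,
    singleton_subset_iff, mem_Icc, mem_Icc]
  grind

end Intervals

namespace AxisRect

theorem frontier_X (R : AxisRect) : frontier R.X = {R.a, R.b} :=
  frontier_Icc R.hab.le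

theorem frontier_Y (R : AxisRect) : frontier R.Y = {R.c, R.d} :=
  frontier_Icc R.hcd.le

theorem isClosed_X (R : AxisRect) : IsClosed R.X :=
  isClosed_Icc

theorem isClosed_Y (R : AxisRect) : IsClosed R.Y :=
  isClosed_Icc

theorem toSet_subset_toSet_iff {R S : AxisRect} :
    R.toSet ⊆ S.toSet ↔ ({R.a, R.b} ∩ S.X).ncard = 2 ∧ ({R.c, R.d} ∩ S.Y).ncard = 2 := by
  simp only [toSet, X, Y, ncard_pair_inter_Icc_eq_two_iff R.hab,
    ncard_pair_inter_Icc_eq_two_iff R.hcd]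
  exact prod_subset_prod_iff' ⟨(R.a, R.c), left_mem_Icc.2 R.hab.le, left_mem_Icc.2 R.hcd.le⟩

theorem exists_corner_mem_toSet_iff {R S : AxisRect} :
    (∃ p ∈ R.corners, p ∈ S.toSet) ↔
      0 < ({R.a, R.b} ∩ S.X).ncard ∧ 0 < ({R.c, R.d} ∩ S.Y).ncard := by
  rw [ncard_pos, ncard_pos, ← prod_nonempty_iff, ← prod_inter_prod]
  rfl

end AxisRect

namespace GenPosPair

variable {R S : AxisRect}

theorem disjoint_frontier_X (h : GenPosPair R S) : Disjoint (frontier R.X) (frontier S.X) := by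
  obtain ⟨haa, hab, hba, hbb, -⟩ := h
  simp only [AxisRect.frontier_X, disjoint_insert_left, disjoint_insert_right, disjoint_singleton,
    mem_insert_iff, mem_singleton_iff]
  grind

theorem disjoint_frontier_Y (h : GenPosPair R S) : Disjoint (frontier R.Y) (frontier S.Y) := by
  obtain ⟨-, -, -, -, hcc, hcd, hdc, hdd⟩ := h
  simp only [AxisRect.frontier_Y, disjoint_insert_left, disjoint_insert_right, disjoint_singleton,
    mem_insert_iff, mem_singleton_iff]
  grind

theorem ncard_frontier_inter_frontier (h : GenPosPair R S) :
    (frontier R.toSet ∩ frontier S.toSet).ncard =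
      ({S.a, S.b} ∩ R.X).ncard * ({R.c, R.d} ∩ S.Y).ncard +
        ({R.a, R.b} ∩ S.X).ncard * ({S.c, S.d} ∩ R.Y).ncard := by
  have hX := h.disjoint_frontier_X
  rw [AxisRect.toSet, AxisRect.toSet, frontier_prod_inter_frontier_prod R.isClosed_X S.isClosed_X
    R.isClosed_Y S.isClosed_Y hX h.disjoint_frontier_Y, ncard_prod_union_prod
    (hX.symm.mono inter_subset_left inter_subset_left), R.frontier_X, S.frontier_X, R.frontier_Y,
    S.frontier_Y]
  all_goals exact Finite.inter_of_left (by simp [AxisRect.frontier_X, AxisRect.frontier_Y]) _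

end GenPosPair

/-- **Corner intersection.** If two rectangles in general position intersect, neither
contains the other, and a corner of one lies in the other, then their topological
boundaries intersect in exactly two points. -/
theorem corner_intersection_two_joints (R1 R2 : AxisRect) (hgp : GenPosPair R1 R2)
    (hint : (R1.toSet ∩ R2.toSet).Nonempty)
    (hns1 : ¬ R1.toSet ⊆ R2.toSet) (hns2 : ¬ R2.toSet ⊆ R1.toSet)
    (hcorner : (∃ p ∈ R1.corners, p ∈ R2.toSet) ∨ (∃ p ∈ R2.corners, p ∈ R1.toSet)) :
    (frontier R1.toSet ∩ frontier R2.toSet).ncard = 2 := by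
  rw [hgp.ncard_frontier_inter_frontier]
  obtain ⟨haa, -, -, hbb, hcc, -, -, hdd⟩ := hgp
  rw [AxisRect.toSet, AxisRect.toSet, prod_inter_prod, prod_nonempty_iff] at hint
  have hx : ({R2.a, R2.b} ∩ R1.X).ncard + ({R1.a, R1.b} ∩ R2.X).ncard = 2 :=
    ncard_pair_inter_Icc_add_ncard_pair_inter_Icc R1.hab R2.hab haa hbb hint.1
  have hy : ({R2.c, R2.d} ∩ R1.Y).ncard + ({R1.c, R1.d} ∩ R2.Y).ncard = 2 :=
    ncard_pair_inter_Icc_add_ncard_pair_inter_Icc R1.hcd R2.hcd hcc hdd hint.2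
  rw [AxisRect.toSet_subset_toSet_iff] at hns1 hns2
  rw [AxisRect.exists_corner_mem_toSet_iff, AxisRect.exists_corner_mem_toSet_iff] at hcorner
  generalize ({R2.a, R2.b} ∩ R1.X).ncard = A at *
  generalize ({R1.a, R1.b} ∩ R2.X).ncard = B at *
  generalize ({R2.c, R2.d} ∩ R1.Y).ncard = C at *
  generalize ({R1.c, R1.d} ∩ R2.Y).ncard = D at *
  have hB : B ≤ 2 := by omega
  have hD : D ≤ 2 := by omega
  interval_cases B <;> interval_cases D <;> omega
end

section
/- Let q ≥ 1 be an integer and let F be a finite set of n axis-parallel rectangles in general position such that no two rectangles of F cross and no q + 1 rectangles of F pairwise intersect. Then the number of unordered pairs of distinct intersecting rectangles of F is at most 4(q − 1)·n. -/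
open Finset in
theorem ncard_intersecting_pairs_le {α ι κ : Type*} [Fintype ι] [LinearOrder ι] [Fintype κ]
    {q : ℕ} (A : ι → Set α) (w : ι → κ → α) (hw : ∀ i k, w i k ∈ A i)
    (hclique : ∀ S : Finset ι, (∀ i ∈ S, ∀ j ∈ S, (A i ∩ A j).Nonempty) → S.card ≤ q)
    (hcover : ∀ i j, i < j → (A i ∩ A j).Nonempty → ∃ k, w i k ∈ A j ∨ w j k ∈ A i) :
    {p : ι × ι | p.1 < p.2 ∧ (A p.1 ∩ A p.2).Nonempty}.ncard
      ≤ Fintype.card κ * (q - 1) * Fintype.card ι := by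
  classical
  -- With `i` added, these sets share the point `w i k`, so they form a clique.
  let others (i : ι) (k : κ) : Finset ι := (univ.filter (w i k ∈ A ·)).erase i
  have card_others (i : ι) (k : κ) : (others i k).card ≤ q - 1 := by
    rw [card_erase_of_mem (by simp [hw])]
    exact Nat.sub_le_sub_right
      (hclique _ fun a ha b hb => ⟨w i k, (mem_filter.1 ha).2, (mem_filter.1 hb).2⟩) 1
  let pairs : Finset (ι × ι) :=
    univ.biUnion fun ik : ι × κ => (others ik.1 ik.2).image fun j => (min ik.1 j, max ik.1 j)
  have hsub : {p : ι × ι | p.1 < p.2 ∧ (A p.1 ∩ A p.2).Nonempty} ⊆ pairs := by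
    rintro ⟨i, j⟩ ⟨hij, hint⟩
    obtain ⟨k, hk | hk⟩ := hcover i j hij hint
    · simp only [pairs, others, coe_biUnion, coe_image, Set.mem_iUnion, Set.mem_image]
      exact ⟨(i, k), mem_coe.2 (mem_univ _), j, by simp [hk, hij.ne', hij.le]⟩
    · simp only [pairs, others, coe_biUnion, coe_image, Set.mem_iUnion, Set.mem_image]
      exact ⟨(j, k), mem_coe.2 (mem_univ _), i, by simp [hk, hij.ne, hij.le]⟩
  calc _ ≤ pairs.card := (Set.ncard_le_ncard hsub).trans (Set.ncard_coe_finset _).le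
    _ ≤ (univ : Finset (ι × κ)).card * (q - 1) :=
      card_biUnion_le_card_mul _ _ _ fun ik _ => card_image_le.trans (card_others ik.1 ik.2)
    _ = Fintype.card κ * (q - 1) * Fintype.card ι := by
      rw [card_univ, Fintype.card_prod]; ring

theorem Set.left_mem_or_right_mem_or_Icc_ssubset {α : Type*} [LinearOrder α] {a₁ b₁ a₂ b₂ : α}
    (h : (Set.Icc a₁ b₁ ∩ Set.Icc a₂ b₂).Nonempty) :
    a₁ ∈ Set.Icc a₂ b₂ ∨ b₁ ∈ Set.Icc a₂ b₂ ∨ Set.Icc a₂ b₂ ⊂ Set.Icc a₁ b₁ := by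
  obtain ⟨t, ⟨h₁, h₁'⟩, h₂, h₂'⟩ := h
  by_contra! hne
  obtain ⟨ha, hb, hss⟩ := hne
  simp only [Set.mem_Icc, not_and_or, not_le] at ha hb
  rcases ha with ha | ha <;> rcases hb with hb | hb
  all_goals first | order | exact hss (Set.Icc_ssubset_Icc_left (by order) ha hb.le)

namespace AxisRect

def corner (R : AxisRect) (k : Bool × Bool) : ℝ × ℝ :=
  (bif k.1 then R.b else R.a, bif k.2 then R.d else R.c)

theorem corner_mem (R : AxisRect) (k : Bool × Bool) : R.corner k ∈ R.toSet := by
  have := R.hab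
  have := R.hcd
  rcases k with ⟨_ | _, _ | _⟩ <;> simp [corner, toSet, X, Y, le_of_lt, *]

theorem exists_corner_mem_iff (R S : AxisRect) :
    (∃ k, R.corner k ∈ S.toSet) ↔ (R.a ∈ S.X ∨ R.b ∈ S.X) ∧ (R.c ∈ S.Y ∨ R.d ∈ S.Y) := by
  simp [corner, toSet, Prod.exists, Bool.exists_bool]

theorem exists_corner_mem_of_not_cross {R S : AxisRect} (hnc : ¬ R.Cross S)
    (h : (R.toSet ∩ S.toSet).Nonempty) :
    ∃ k, R.corner k ∈ S.toSet ∨ S.corner k ∈ R.toSet := by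
  rw [toSet, toSet, Set.prod_inter_prod, Set.prod_nonempty_iff] at h
  obtain ⟨hX, hY⟩ := h
  have hXRS : (R.a ∈ S.X ∨ R.b ∈ S.X) ∨ S.X ⊂ R.X :=
    or_assoc.2 (Set.left_mem_or_right_mem_or_Icc_ssubset hX)
  have hXSR : (S.a ∈ R.X ∨ S.b ∈ R.X) ∨ R.X ⊂ S.X :=
    or_assoc.2 (Set.left_mem_or_right_mem_or_Icc_ssubset (Set.inter_comm R.X S.X ▸ hX))
  have hYRS : (R.c ∈ S.Y ∨ R.d ∈ S.Y) ∨ S.Y ⊂ R.Y :=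
    or_assoc.2 (Set.left_mem_or_right_mem_or_Icc_ssubset hY)
  have hYSR : (S.c ∈ R.Y ∨ S.d ∈ R.Y) ∨ R.Y ⊂ S.Y :=
    or_assoc.2 (Set.left_mem_or_right_mem_or_Icc_ssubset (Set.inter_comm R.Y S.Y ▸ hY))
  rw [exists_or, exists_corner_mem_iff, exists_corner_mem_iff]
  rcases hXRS with hRX | hSX
  · rcases hYRS with hRY | hSY
    · exact Or.inl ⟨hRX, hRY⟩
    have hSY' := hYSR.resolve_right (ssubset_asymm hSY)
    rcases hXSR with hSX | hRX'
    · exact Or.inr ⟨hSX, hSY'⟩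
    · exact absurd (Or.inl ⟨hRX', hSY⟩) hnc
  · have hSX' := hXSR.resolve_right (ssubset_asymm hSX)
    rcases hYSR with hSY | hRY
    · exact Or.inr ⟨hSX', hSY⟩
    · exact absurd (Or.inr ⟨hSX, hRY⟩) hnc

end AxisRect

theorem intersecting_pair_count_general (q n : ℕ) (R : Fin n → AxisRect)
    (hnc : ∀ i j : Fin n, ¬ AxisRect.Cross (R i) (R j))
    (hclique : ∀ S : Finset (Fin n),
      (∀ i ∈ S, ∀ j ∈ S, ((R i).toSet ∩ (R j).toSet).Nonempty) → S.card ≤ q) :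
    ({p : Fin n × Fin n |
        p.1 < p.2 ∧ ((R p.1).toSet ∩ (R p.2).toSet).Nonempty}).ncard
      ≤ 4 * (q - 1) * n := by
  simpa using ncard_intersecting_pairs_le (fun i => (R i).toSet)
    (fun i => (R i).corner) (fun i => (R i).corner_mem) hclique
    fun i j _ => AxisRect.exists_corner_mem_of_not_cross (hnc i j)

/-- **Edge count of non-crossing bounded-clique families.** If no two rectangles of a
family of `n` rectangles in general position cross and no `q + 1` of them pairwise
intersect, then the number of unordered pairs of distinct intersecting rectangles is at
most `4 (q - 1) n`. -/
theorem intersecting_pair_count (q n : ℕ) (hq : 1 ≤ q) (R : Fin n → AxisRect)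
    (hgp : ∀ i j : Fin n, i ≠ j → GenPosPair (R i) (R j))
    (hnc : ∀ i j : Fin n, ¬ AxisRect.Cross (R i) (R j))
    (hclique : ∀ S : Finset (Fin n),
      (∀ i ∈ S, ∀ j ∈ S, ((R i).toSet ∩ (R j).toSet).Nonempty) → S.card ≤ q) :
    ({p : Fin n × Fin n |
        p.1 < p.2 ∧ ((R p.1).toSet ∩ (R p.2).toSet).Nonempty}).ncard
      ≤ 4 * (q - 1) * n :=
  intersecting_pair_count_general q n R hnc hclique
end

section
/- Let R1 and R2 be two distinct axis-parallel rectangles in general position. Then R1 and R2 cross if and only if the set difference R1 \ R2 is not a preconnected subset of ℝ². In particular, for non-crossing pairs (disjoint pairs, containment intersections, and corner intersections) R1 \ R2 is preconnected. -/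
/-!
Write `R₁ \ R₂ = X₁ × (Y₁ \ Y₂) ∪ (X₁ \ X₂) × Y₁`. When both differences of projections are
nonempty, this set is preconnected: fixing `a ∈ X₁ \ X₂` and `b ∈ Y₁ \ Y₂`, every point of it lies
on a horizontal or vertical segment inside it that meets the cross through `(a, b)`. When
`Y₁ ⊆ Y₂`, the set is `(X₁ \ X₂) × Y₁`, which is preconnected iff `X₁ \ X₂` is, and a difference
of two intervals is disconnected iff the second lies in the interior of the first. Under general
position the non-strict containments of projections are strict, and the two disconnected cases
are exactly the two ways of crossing.
-/

open Set

theorem Set.not_ordConnected_Icc_sdiff_Icc_iff {α : Type*} [LinearOrder α] {a b p q : α}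
    (hpq : p ≤ q) : ¬ (Icc a b \ Icc p q).OrdConnected ↔ Icc p q ⊆ Ioo a b := by
  rw [Icc_subset_Ioo_iff hpq]
  constructor
  · intro h
    by_contra! hout
    refine h ⟨fun x hx y hy z hz => ⟨⟨hx.1.1.trans hz.1, hz.2.trans hy.1.2⟩, fun hzpq => ?_⟩⟩
    by_cases hap : a < p
    · exact hy.2 ⟨hzpq.1.trans hz.2, hy.1.2.trans (hout hap)⟩
    · exact hx.2 ⟨(not_lt.1 hap).trans hx.1.1, hz.1.trans hzpq.2⟩
  · rintro ⟨hap, hqb⟩ h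
    have hab : a ≤ b := hap.le.trans (hpq.trans hqb.le)
    exact (h.out ⟨left_mem_Icc.2 hab, fun h' => hap.not_ge h'.1⟩
      ⟨right_mem_Icc.2 hab, fun h' => hqb.not_ge h'.2⟩ ⟨hap.le, hpq.trans hqb.le⟩).2
      (left_mem_Icc.2 hpq)

theorem Set.not_isPreconnected_Icc_sdiff_Icc_iff {α : Type*} [ConditionallyCompleteLinearOrder α]
    [TopologicalSpace α] [OrderTopology α] [DenselyOrdered α] {a b p q : α} (hpq : p ≤ q)
    (hap : a ≠ p) (hbq : b ≠ q) :
    ¬ IsPreconnected (Icc a b \ Icc p q) ↔ Icc p q ⊆ Icc a b := by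
  rw [isPreconnected_iff_ordConnected, not_ordConnected_Icc_sdiff_Icc_iff hpq,
    Icc_subset_Ioo_iff hpq, Icc_subset_Icc_iff hpq]
  exact ⟨fun h => ⟨h.1.le, h.2.le⟩, fun h => ⟨h.1.lt_of_ne hap, h.2.lt_of_ne hbq.symm⟩⟩

theorem Set.Icc_ssubset_Icc_iff_subset {α : Type*} [PartialOrder α] {a b p q : α} (hab : a ≤ b)
    (hap : a ≠ p) : Icc a b ⊂ Icc p q ↔ Icc a b ⊆ Icc p q :=
  ⟨fun h => h.subset, fun h => h.ssubset_of_ne fun he => hap ((Icc_eq_Icc_iff hab).1 he).1⟩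

section Products

variable {α β : Type*} [TopologicalSpace α] [TopologicalSpace β]

theorem isPreconnected_prod_union_singleton_prod {X : Set α} {Y : Set β} (hX : IsPreconnected X)
    (hY : IsPreconnected Y) {x : α} {y : β} (hx : x ∈ X) (hy : y ∈ Y) :
    IsPreconnected (X ×ˢ {y} ∪ {x} ×ˢ Y) :=
  (hX.prod isPreconnected_singleton).union (x, y) ⟨hx, rfl⟩ ⟨rfl, hy⟩
    (isPreconnected_singleton.prod hY)

theorem isPreconnected_prod_union_prod {X A : Set α} {Y B : Set β} (hX : IsPreconnected X)
    (hY : IsPreconnected Y) (hAX : A ⊆ X) (hBY : B ⊆ Y) (hA : A.Nonempty) (hB : B.Nonempty) :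
    IsPreconnected (X ×ˢ B ∪ A ×ˢ Y) := by
  have hsub : ∀ x ∈ A, ∀ y ∈ B, X ×ˢ {y} ∪ {x} ×ˢ Y ⊆ X ×ˢ B ∪ A ×ˢ Y := fun x hx y hy =>
    union_subset_union (prod_mono subset_rfl (singleton_subset_iff.2 hy))
      (prod_mono (singleton_subset_iff.2 hx) subset_rfl)
  obtain ⟨a, ha⟩ := hA
  obtain ⟨b, hb⟩ := hB
  refine isPreconnected_of_forall (a, b) ?_
  rintro ⟨x, y⟩ (⟨hx, hy⟩ | ⟨hx, hy⟩)
  · exact ⟨_, hsub a ha y hy, Or.inr ⟨rfl, hBY hb⟩, Or.inl ⟨hx, rfl⟩,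
      isPreconnected_prod_union_singleton_prod hX hY (hAX ha) (hBY hy)⟩
  · exact ⟨_, hsub x hx b hb, Or.inl ⟨hAX ha, rfl⟩, Or.inr ⟨rfl, hy⟩,
      isPreconnected_prod_union_singleton_prod hX hY (hAX hx) (hBY hb)⟩

theorem isPreconnected_prod_iff_left {A : Set α} {Y : Set β} (hY : IsPreconnected Y)
    (hYne : Y.Nonempty) : IsPreconnected (A ×ˢ Y) ↔ IsPreconnected A :=
  ⟨fun h => fst_image_prod A hYne ▸ h.image _ continuous_fst.continuousOn, fun h => h.prod hY⟩

theorem isPreconnected_prod_iff_right {X : Set α} {B : Set β} (hX : IsPreconnected X)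
    (hXne : X.Nonempty) : IsPreconnected (X ×ˢ B) ↔ IsPreconnected B :=
  ⟨fun h => snd_image_prod hXne B ▸ h.image _ continuous_snd.continuousOn, fun h => hX.prod h⟩

end Products

namespace AxisRect

variable (R : AxisRect)

theorem isPreconnected_X : IsPreconnected R.X := isPreconnected_Icc

theorem isPreconnected_Y : IsPreconnected R.Y := isPreconnected_Icc

theorem nonempty_X : R.X.Nonempty := nonempty_Icc.2 R.hab.le

theorem nonempty_Y : R.Y.Nonempty := nonempty_Icc.2 R.hcd.le

variable {R} {S : AxisRect}

theorem not_isPreconnected_X_sdiff_iff (ha : R.a ≠ S.a) (hb : R.b ≠ S.b) :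
    ¬ IsPreconnected (R.X \ S.X) ↔ S.X ⊆ R.X :=
  not_isPreconnected_Icc_sdiff_Icc_iff S.hab.le ha hb

theorem not_isPreconnected_Y_sdiff_iff (hc : R.c ≠ S.c) (hd : R.d ≠ S.d) :
    ¬ IsPreconnected (R.Y \ S.Y) ↔ S.Y ⊆ R.Y :=
  not_isPreconnected_Icc_sdiff_Icc_iff S.hcd.le hc hd

theorem cross_iff_of_genPosPair (h : GenPosPair R S) :
    R.Cross S ↔ (R.X ⊆ S.X ∧ S.Y ⊆ R.Y) ∨ (S.X ⊆ R.X ∧ R.Y ⊆ S.Y) := by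
  obtain ⟨ha, -, -, -, hc, -, -, -⟩ := h
  rw [Cross, X, X, Y, Y,
    Icc_ssubset_Icc_iff_subset R.hab.le ha, Icc_ssubset_Icc_iff_subset S.hcd.le hc.symm,
    Icc_ssubset_Icc_iff_subset S.hab.le ha.symm, Icc_ssubset_Icc_iff_subset R.hcd.le hc]

end AxisRect

theorem cross_iff_diff_not_preconnected_general (R1 R2 : AxisRect)
    (hgp : GenPosPair R1 R2) :
    AxisRect.Cross R1 R2 ↔ ¬ IsPreconnected (R1.toSet \ R2.toSet) := by
  rw [AxisRect.cross_iff_of_genPosPair hgp, AxisRect.toSet, AxisRect.toSet, prod_sdiff_prod]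
  obtain ⟨ha, -, -, hb, hc, -, -, hd⟩ := hgp
  by_cases hY : R1.Y ⊆ R2.Y
  · have hY' : ¬ R2.Y ⊆ R1.Y := ((Icc_ssubset_Icc_iff_subset R1.hcd.le hc).2 hY).not_superset
    rw [sdiff_eq_empty.2 hY, prod_empty, empty_union,
      isPreconnected_prod_iff_left R1.isPreconnected_Y R1.nonempty_Y,
      AxisRect.not_isPreconnected_X_sdiff_iff ha hb]
    tauto
  by_cases hX : R1.X ⊆ R2.X
  · have hX' : ¬ R2.X ⊆ R1.X := ((Icc_ssubset_Icc_iff_subset R1.hab.le ha).2 hX).not_superset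
    rw [sdiff_eq_empty.2 hX, empty_prod, union_empty,
      isPreconnected_prod_iff_right R1.isPreconnected_X R1.nonempty_X,
      AxisRect.not_isPreconnected_Y_sdiff_iff hc hd]
    tauto
  simp only [hX, hY, false_and, and_false, or_false, false_iff, not_not]
  exact isPreconnected_prod_union_prod R1.isPreconnected_X R1.isPreconnected_Y sdiff_subset
    sdiff_subset (sdiff_nonempty.2 hX) (sdiff_nonempty.2 hY)

/-- Two distinct rectangles in general position cross if and only if the set difference
`R1 \ R2` is not a preconnected subset of the plane. In particular, for non-crossing pairs
the difference is preconnected. -/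
theorem cross_iff_diff_not_preconnected (R1 R2 : AxisRect) (hne : R1 ≠ R2)
    (hgp : GenPosPair R1 R2) :
    AxisRect.Cross R1 R2 ↔ ¬ IsPreconnected (R1.toSet \ R2.toSet) :=
  cross_iff_diff_not_preconnected_general R1 R2 hgp
end
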